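/- arXiv:1803.01075 — 3 statements merged into one kernel-verified Lean document; each statement's English description precedes it below -/
import Mathlib

section
/- Let Q be an inverse quantal frame and X a Q-sheaf. Then every Hilbert section s of X is regular, i.e., ⟨s,s⟩s = s. -/
/-- A unital involutive quantale: a complete lattice with an associative
multiplication preserving arbitrary joins in each variable, a unit `e`, and a
join-preserving involution. -/
structure Quantale' (Q : Type*) [CompleteLattice Q] where
  mul : Q → Q → Q
  e : Q
  star : Q → Q
  mul_assoc : ∀ a b c, mul (mul a b) c = mul a (mul b c)
  sSup_mul : ∀ (S : Set Q) (b : Q), mul (sSup S) b = ⨆ a ∈ S, mul a b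
  mul_sSup : ∀ (a : Q) (S : Set Q), mul a (sSup S) = ⨆ b ∈ S, mul a b
  e_mul : ∀ a, mul e a = a
  mul_e : ∀ a, mul a e = a
  star_star : ∀ a, star (star a) = a
  star_mul : ∀ a b, star (mul a b) = mul (star b) (star a)
  star_sSup : ∀ S : Set Q, star (sSup S) = ⨆ a ∈ S, star a

/-- The set of partial units of a quantale. -/
def Quantale'.PU {Q : Type*} [CompleteLattice Q] (Qs : Quantale' Q) : Set Q :=
  {s | Qs.mul s (Qs.star s) ≤ Qs.e ∧ Qs.mul (Qs.star s) s ≤ Qs.e}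

/-- An inverse quantal frame: a unital involutive quantale which is a frame,
has a stable support, and whose partial units join to the top. -/
structure InverseQuantalFrame (Q : Type*) [Order.Frame Q] extends toQuantale : Quantale' Q where
  supp : Q → Q
  supp_le_e : ∀ a, supp a ≤ e
  supp_sSup : ∀ S : Set Q, supp (sSup S) = ⨆ a ∈ S, supp a
  supp_le_mul_star : ∀ a, supp a ≤ mul a (star a)
  le_supp_mul : ∀ a, a ≤ mul (supp a) a
  supp_stable : ∀ b a, b ≤ e → supp (mul b a) = mul b (supp a)
  sSup_PU : sSup {s | mul s (star s) ≤ e ∧ mul (star s) s ≤ e} = ⊤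

/-- A left module over a quantale: a complete lattice with a unital associative
action preserving arbitrary joins in each variable. -/
structure QuantaleModule {Q : Type*} [CompleteLattice Q] (Qs : Quantale' Q)
    (X : Type*) [CompleteLattice X] where
  act : Q → X → X
  act_mul : ∀ a b x, act (Qs.mul a b) x = act a (act b x)
  act_e : ∀ x, act Qs.e x = x
  sSup_act : ∀ (S : Set Q) (x : X), act (sSup S) x = ⨆ a ∈ S, act a x
  act_sSup : ∀ (a : Q) (S : Set X), act a (sSup S) = ⨆ x ∈ S, act a x

/-- A pre-Hilbert module over a quantale. -/
structure PreHilbertModule {Q : Type*} [CompleteLattice Q] (Qs : Quantale' Q)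
    (X : Type*) [CompleteLattice X] extends QuantaleModule Qs X where
  inner : X → X → Q
  inner_act : ∀ a x y, inner (act a x) y = Qs.mul a (inner x y)
  sSup_inner : ∀ (S : Set X) (y : X), inner (sSup S) y = ⨆ x ∈ S, inner x y
  inner_star : ∀ x y, inner x y = Qs.star (inner y x)

namespace PreHilbertModule

variable {Q X : Type*} [CompleteLattice Q] [CompleteLattice X] {Qs : Quantale' Q}

/-- A Hilbert section: `⟨x,s⟩s ≤ x` for all `x`. -/
def IsHilbertSection (H : PreHilbertModule Qs X) (s : X) : Prop :=
  ∀ x, H.act (H.inner x s) s ≤ x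

/-- A regular element: `⟨s,s⟩s = s`. -/
def IsRegularSection (H : PreHilbertModule Qs X) (s : X) : Prop :=
  H.act (H.inner s s) s = s

/-- A Hilbert basis: `x = ⋁_{t ∈ S} ⟨x,t⟩t` for all `x`. -/
def IsHilbertBasis (H : PreHilbertModule Qs X) (S : Set X) : Prop :=
  ∀ x, x = ⨆ t ∈ S, H.act (H.inner x t) t

/-- Non-degeneracy of the inner product. -/
def Nondegenerate (H : PreHilbertModule Qs X) : Prop :=
  ∀ x y, (∀ z, H.inner x z = H.inner y z) → x = y

end PreHilbertModule

/-- A `Q`-locale over an inverse quantal frame: a module which is a frame and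
satisfies the anchor condition. -/
structure QLocale {Q : Type*} [Order.Frame Q] (Qf : InverseQuantalFrame Q)
    (X : Type*) [Order.Frame X] extends QuantaleModule Qf.toQuantale X where
  anchor : ∀ b x, b ≤ Qf.e → act b x = act b ⊤ ⊓ x

/-- A `Q`-sheaf over an inverse quantal frame: a pre-Hilbert module which is a
frame, satisfies the anchor condition, and has a Hilbert basis. -/
structure QSheaf {Q : Type*} [Order.Frame Q] (Qf : InverseQuantalFrame Q)
    (X : Type*) [Order.Frame X] extends PreHilbertModule Qf.toQuantale X where
  anchor : ∀ b x, b ≤ Qf.e → act b x = act b ⊤ ⊓ x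
  hasBasis : ∃ S : Set X, ∀ x, x = ⨆ t ∈ S, act (inner x t) t

namespace QSheaf

variable {Q X : Type*} [Order.Frame Q] [Order.Frame X] {Qf : InverseQuantalFrame Q}

/-- The support `ς_X(x) = ⟨x,x⟩ ∧ e` of a `Q`-sheaf. -/
def sppX (H : QSheaf Qf X) (x : X) : Q := H.inner x x ⊓ Qf.e

/-- A local section: `ς_X(x)s = x` for all `x ≤ s`. -/
def IsLocalSection (H : QSheaf Qf X) (s : X) : Prop :=
  ∀ x ≤ s, H.act (H.sppX x) s = x

/-- A principal section: a local section with `⟨s,s⟩ ≤ e`. -/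
def IsPrincipalSection (H : QSheaf Qf X) (s : X) : Prop :=
  H.IsLocalSection s ∧ H.inner s s ≤ Qf.e

/-- A right local section: `x = s ∧ 1_Q·x` for all `x ≤ s`. -/
def IsRightLocalSection (H : QSheaf Qf X) (s : X) : Prop :=
  ∀ x ≤ s, x = s ⊓ H.act ⊤ x

/-- A local bisection: simultaneously a local section and a right local section. -/
def IsBisection (H : QSheaf Qf X) (s : X) : Prop :=
  H.IsLocalSection s ∧ H.IsRightLocalSection s

end QSheaf

/-!
For a basis element `t`, the term `a t` with `a = ⟨s,t⟩` lies below `s`, so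
`a a* = ⟨a t, s⟩ ≤ ⟨s,s⟩`; the support then gives `a t ≤ ς(a) a t ≤ ⟨s,s⟩ s`.
Summing over the basis yields `s ≤ ⟨s,s⟩ s`, and the Hilbert section property
is the reverse inequality.
-/

section

variable {Q X : Type*} [CompleteLattice Q] [CompleteLattice X] {Qs : Quantale' Q}

lemma QuantaleModule.act_mono_left (M : QuantaleModule Qs X) {a b : Q} (h : a ≤ b) (x : X) :
    M.act a x ≤ M.act b x := by
  have h2 : M.act (sSup {a, b}) x = ⨆ c ∈ ({a, b} : Set Q), M.act c x := M.sSup_act _ x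
  rw [sSup_pair, sup_eq_right.mpr h] at h2
  rw [h2]
  exact le_iSup₂ (f := fun c _ => M.act c x) a (Set.mem_insert _ _)

lemma QuantaleModule.act_mono_right (M : QuantaleModule Qs X) (a : Q) {x y : X} (h : x ≤ y) :
    M.act a x ≤ M.act a y := by
  have h2 : M.act a (sSup {x, y}) = ⨆ z ∈ ({x, y} : Set X), M.act a z := M.act_sSup a _
  rw [sSup_pair, sup_eq_right.mpr h] at h2
  rw [h2]
  exact le_iSup₂ (f := fun z _ => M.act a z) x (Set.mem_insert _ _)

lemma PreHilbertModule.inner_mono_left (H : PreHilbertModule Qs X) {x y : X} (h : x ≤ y)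
    (z : X) : H.inner x z ≤ H.inner y z := by
  have h2 : H.inner (sSup {x, y}) z = ⨆ w ∈ ({x, y} : Set X), H.inner w z := H.sSup_inner _ z
  rw [sSup_pair, sup_eq_right.mpr h] at h2
  rw [h2]
  exact le_iSup₂ (f := fun w _ => H.inner w z) x (Set.mem_insert _ _)

lemma PreHilbertModule.act_inner_le_of_isHilbertBasis (H : PreHilbertModule Qs X) {S : Set X}
    (hS : H.IsHilbertBasis S) (x : X) {t : X} (ht : t ∈ S) : H.act (H.inner x t) t ≤ x :=
  (le_iSup₂ (f := fun t (_ : t ∈ S) => H.act (H.inner x t) t) t ht).trans_eq (hS x).symm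

end

namespace PreHilbertModule

variable {Q X : Type*} [Order.Frame Q] [CompleteLattice X] {Qf : InverseQuantalFrame Q}

lemma supp_le_inner_self_of_act_le (H : PreHilbertModule Qf.toQuantale X) {s t : X}
    (hts : H.act (H.inner s t) t ≤ s) : Qf.supp (H.inner s t) ≤ H.inner s s :=
  calc Qf.supp (H.inner s t)
      ≤ Qf.mul (H.inner s t) (Qf.star (H.inner s t)) := Qf.supp_le_mul_star _
    _ = H.inner (H.act (H.inner s t) t) s := by rw [← H.inner_star, H.inner_act]
    _ ≤ H.inner s s := H.inner_mono_left hts s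

lemma act_le_act_inner_self_of_act_le (H : PreHilbertModule Qf.toQuantale X) {s t : X}
    (hts : H.act (H.inner s t) t ≤ s) :
    H.act (H.inner s t) t ≤ H.act (H.inner s s) s :=
  calc H.act (H.inner s t) t
      ≤ H.act (Qf.mul (Qf.supp (H.inner s t)) (H.inner s t)) t :=
        H.act_mono_left (Qf.le_supp_mul _) t
    _ = H.act (Qf.supp (H.inner s t)) (H.act (H.inner s t) t) := H.act_mul _ _ _
    _ ≤ H.act (Qf.supp (H.inner s t)) s := H.act_mono_right _ hts
    _ ≤ H.act (H.inner s s) s := H.act_mono_left (H.supp_le_inner_self_of_act_le hts) s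

lemma le_act_inner_self_of_isHilbertBasis (H : PreHilbertModule Qf.toQuantale X) {S : Set X}
    (hS : H.IsHilbertBasis S) (s : X) : s ≤ H.act (H.inner s s) s := by
  refine (hS s).trans_le (iSup₂_le fun t ht => ?_)
  exact H.act_le_act_inner_self_of_act_le (H.act_inner_le_of_isHilbertBasis hS s ht)

end PreHilbertModule

/-- In a `Q`-sheaf over an inverse quantal frame, every Hilbert
section is regular: `⟨s,s⟩s = s`. -/
theorem stmt1 {Q X : Type*} [Order.Frame Q] [Order.Frame X]
    (Qf : InverseQuantalFrame Q) (H : QSheaf Qf X)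
    (s : X) (hs : H.IsHilbertSection s) :
    H.act (H.inner s s) s = s := by
  obtain ⟨S, hS⟩ := H.hasBasis
  exact le_antisymm (hs s) (H.le_act_inner_self_of_isHilbertBasis hS s)
end

section
/- Let Q be an inverse quantal frame and X a Q-locale. Then for every partial unit s ∈ Q_I, every x ∈ X, and every invariant element y ∈ I(X), one has (sx) ∧ y = s(x ∧ y). (Consequently, with the right action of I(X) on X given by binary meet, the left Q-action and the right I(X)-action on X associate: (sx)·y = s(x·y).) -/
/-! Since `sx ≤ ς(s)·1_X`, the anchor condition makes `ς(s) ≤ ss*` act as the identity on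
`sx ∧ y`; hence `sx ∧ y ≤ s(s*(sx ∧ y))`, and `s*(sx ∧ y) ≤ s*s x ∧ s*y ≤ x ∧ y` because
`s*s ≤ e` and `y` is invariant. -/

namespace QuantaleModule

variable {Q X : Type*} [CompleteLattice Q] [CompleteLattice X] {Qs : Quantale' Q}
  (M : QuantaleModule Qs X)

theorem sup_act (a a' : Q) (x : X) : M.act (a ⊔ a') x = M.act a x ⊔ M.act a' x := by
  rw [← sSup_pair, M.sSup_act, iSup_insert, iSup_singleton]

theorem act_sup (a : Q) (x x' : X) : M.act a (x ⊔ x') = M.act a x ⊔ M.act a x' := by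
  rw [← sSup_pair, M.act_sSup, iSup_insert, iSup_singleton]

theorem act_mono_left_s4 {a a' : Q} (h : a ≤ a') (x : X) : M.act a x ≤ M.act a' x := by
  rw [← sup_eq_right.mpr h, M.sup_act]
  exact le_sup_left

theorem act_mono_right_s4 (a : Q) {x x' : X} (h : x ≤ x') : M.act a x ≤ M.act a x' := by
  rw [← sup_eq_right.mpr h, M.act_sup]
  exact le_sup_left

theorem act_le_of_top_act_eq {y : X} (hy : M.act ⊤ y = y) (a : Q) : M.act a y ≤ y :=
  (M.act_mono_left_s4 le_top y).trans_eq hy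

theorem act_star_act_le {s : Q} (hs : Qs.mul (Qs.star s) s ≤ Qs.e) (x : X) :
    M.act (Qs.star s) (M.act s x) ≤ x := by
  rw [← M.act_mul]
  exact (M.act_mono_left_s4 hs x).trans_eq (M.act_e x)

end QuantaleModule

namespace QLocale

variable {Q X : Type*} [Order.Frame Q] [Order.Frame X] {Qf : InverseQuantalFrame Q}
  (H : QLocale Qf X)

theorem act_supp_of_le {a : Q} {x z : X} (hz : z ≤ H.act a x) : H.act (Qf.supp a) z = z := by
  have hz_supp : z ≤ H.act (Qf.supp a) ⊤ :=
    calc z ≤ H.act a x := hz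
      _ ≤ H.act (Qf.mul (Qf.supp a) a) x := H.act_mono_left_s4 (Qf.le_supp_mul a) x
      _ = H.act (Qf.supp a) (H.act a x) := H.act_mul _ _ _
      _ ≤ H.act (Qf.supp a) ⊤ := H.act_mono_right_s4 _ le_top
  rw [H.anchor _ _ (Qf.supp_le_e a), inf_eq_right.mpr hz_supp]

theorem le_act_mul_star_of_le {a : Q} {x z : X} (hz : z ≤ H.act a x) :
    z ≤ H.act (Qf.mul a (Qf.star a)) z :=
  calc z = H.act (Qf.supp a) z := (H.act_supp_of_le hz).symm
    _ ≤ H.act (Qf.mul a (Qf.star a)) z := H.act_mono_left_s4 (Qf.supp_le_mul_star a) z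

end QLocale

/-- In a `Q`-locale over an inverse quantal frame, for every
partial unit `s ∈ Q_I`, every `x ∈ X` and every invariant `y` one has
`(sx) ∧ y = s(x ∧ y)`. -/
theorem stmt4 {Q X : Type*} [Order.Frame Q] [Order.Frame X]
    (Qf : InverseQuantalFrame Q) (H : QLocale Qf X)
    (s : Q) (hs : s ∈ Qf.toQuantale.PU)
    (x y : X) (hy : H.act ⊤ y = y) :
    H.act s x ⊓ y = H.act s (x ⊓ y) := by
  obtain ⟨-, hs_star_mul⟩ := hs
  apply le_antisymm
  · have hstar : H.act (Qf.star s) (H.act s x ⊓ y) ≤ x ⊓ y :=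
      le_inf ((H.act_mono_right_s4 _ inf_le_left).trans (H.act_star_act_le hs_star_mul x))
        ((H.act_mono_right_s4 _ inf_le_right).trans (H.act_le_of_top_act_eq hy _))
    calc H.act s x ⊓ y ≤ H.act (Qf.mul s (Qf.star s)) (H.act s x ⊓ y) :=
          H.le_act_mul_star_of_le inf_le_left
      _ = H.act s (H.act (Qf.star s) (H.act s x ⊓ y)) := H.act_mul _ _ _
      _ ≤ H.act s (x ⊓ y) := H.act_mono_right_s4 _ hstar
  · exact le_inf (H.act_mono_right_s4 _ inf_le_left)
      ((H.act_mono_right_s4 _ inf_le_right).trans (H.act_le_of_top_act_eq hy _))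
end

section
/- Let Q be an inverse quantal frame, X a Q-sheaf, t a principal section of X, and u ∈ Q_I a partial unit with ς_X(t) = ς_Q(u*). Set s := ut. Then s is a principal section of X, ⟨s,t⟩ = u, and ς_X(s) = ς_Q(u). -/
/-!
Since `ς_X(t) = u*u` and `u*u ≤ e`, one gets `⟨ut,t⟩ = u⟨t,t⟩ = uu*u = u`, hence
`⟨ut,ut⟩ = u⟨ut,t⟩* = uu* = ς_Q(u)`. For the local section property, take `x ≤ ut`: then
`u*x ≤ t`, so `ς_X(u*x)t = u*x` with `ς_X(u*x) = u*⟨x,x⟩u`, while the anchor condition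
gives `uu*x = x`; multiplying by `u` turns the first identity into `⟨x,x⟩ut = x`.
-/

lemma monotone_of_map_sSup {α β : Type*} [CompleteLattice α] [CompleteLattice β] {f : α → β}
    (hf : ∀ S : Set α, f (sSup S) = ⨆ a ∈ S, f a) : Monotone f := by
  intro a b hab
  have hb : f b = f (sSup {a, b}) := by rw [sSup_pair, sup_eq_right.2 hab]
  rw [hb, hf]
  exact le_biSup f (Set.mem_insert a {b})

namespace Quantale'

variable {Q : Type*} [CompleteLattice Q] (Qs : Quantale' Q)

lemma mul_mono {a b c d : Q} (hab : a ≤ b) (hcd : c ≤ d) : Qs.mul a c ≤ Qs.mul b d :=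
  (monotone_of_map_sSup (f := (Qs.mul · c)) (Qs.sSup_mul · c) hab).trans
    (monotone_of_map_sSup (f := Qs.mul b) (Qs.mul_sSup b) hcd)

lemma star_mono {a b : Q} (h : a ≤ b) : Qs.star a ≤ Qs.star b :=
  monotone_of_map_sSup Qs.star_sSup h

lemma mul_mul_star_le_e {a c : Q} (ha : Qs.mul a (Qs.star a) ≤ Qs.e) (hc : c ≤ Qs.e) :
    Qs.mul (Qs.mul a c) (Qs.star a) ≤ Qs.e :=
  calc Qs.mul (Qs.mul a c) (Qs.star a) ≤ Qs.mul (Qs.mul a Qs.e) (Qs.star a) :=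
        Qs.mul_mono (Qs.mul_mono le_rfl hc) le_rfl
    _ = Qs.mul a (Qs.star a) := by rw [Qs.mul_e]
    _ ≤ Qs.e := ha

end Quantale'

namespace InverseQuantalFrame

variable {Q : Type*} [Order.Frame Q] (Qf : InverseQuantalFrame Q)

lemma supp_eq_mul_star {a : Q} (h : Qf.mul a (Qf.star a) ≤ Qf.e) :
    Qf.supp a = Qf.mul a (Qf.star a) := by
  refine le_antisymm (Qf.supp_le_mul_star a) ?_
  calc Qf.mul a (Qf.star a) ≤ Qf.mul (Qf.mul (Qf.supp a) a) (Qf.star a) :=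
        Qf.mul_mono (Qf.le_supp_mul a) le_rfl
    _ = Qf.mul (Qf.supp a) (Qf.mul a (Qf.star a)) := Qf.mul_assoc _ _ _
    _ ≤ Qf.mul (Qf.supp a) Qf.e := Qf.mul_mono le_rfl h
    _ = Qf.supp a := Qf.mul_e _

lemma mul_star_mul_eq {a : Q} (h : Qf.mul a (Qf.star a) ≤ Qf.e) :
    Qf.mul (Qf.mul a (Qf.star a)) a = a := by
  refine le_antisymm ?_ ?_
  · calc Qf.mul (Qf.mul a (Qf.star a)) a ≤ Qf.mul Qf.e a := Qf.mul_mono h le_rfl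
      _ = a := Qf.e_mul a
  · calc a ≤ Qf.mul (Qf.supp a) a := Qf.le_supp_mul a
      _ = Qf.mul (Qf.mul a (Qf.star a)) a := by rw [Qf.supp_eq_mul_star h]

end InverseQuantalFrame

lemma QuantaleModule.act_mono {Q X : Type*} [CompleteLattice Q] [CompleteLattice X]
    {Qs : Quantale' Q} (M : QuantaleModule Qs X) {a b : Q} {x y : X}
    (hab : a ≤ b) (hxy : x ≤ y) : M.act a x ≤ M.act b y :=
  (monotone_of_map_sSup (f := (M.act · x)) (M.sSup_act · x) hab).trans
    (monotone_of_map_sSup (f := M.act b) (M.act_sSup b) hxy)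

namespace PreHilbertModule

variable {Q X : Type*} [CompleteLattice Q] [CompleteLattice X] {Qs : Quantale' Q}
  (H : PreHilbertModule Qs X)

lemma inner_mono {x y z w : X} (hxy : x ≤ y) (hzw : z ≤ w) : H.inner x z ≤ H.inner y w := by
  have hleft (z : X) : Monotone (H.inner · z) := monotone_of_map_sSup (H.sSup_inner · z)
  calc H.inner x z ≤ H.inner y z := hleft z hxy
    _ = Qs.star (H.inner z y) := H.inner_star y z
    _ ≤ Qs.star (H.inner w y) := Qs.star_mono (hleft y hzw)
    _ = H.inner y w := (H.inner_star y w).symm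

lemma inner_act_act (a : Q) (x : X) :
    H.inner (H.act a x) (H.act a x) = Qs.mul (Qs.mul a (H.inner x x)) (Qs.star a) := by
  rw [H.inner_act, H.inner_star x, H.inner_act, Qs.star_mul, ← H.inner_star, ← Qs.mul_assoc]

end PreHilbertModule

namespace QSheaf

variable {Q X : Type*} [Order.Frame Q] [Order.Frame X] {Qf : InverseQuantalFrame Q}
  (H : QSheaf Qf X)

lemma sppX_eq_inner_self {x : X} (h : H.inner x x ≤ Qf.e) : H.sppX x = H.inner x x :=
  inf_eq_left.2 h

lemma act_le_act_supp_top (a : Q) (y : X) : H.act a y ≤ H.act (Qf.supp a) ⊤ :=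
  calc H.act a y ≤ H.act (Qf.mul (Qf.supp a) a) y := H.act_mono (Qf.le_supp_mul a) le_rfl
    _ = H.act (Qf.supp a) (H.act a y) := H.act_mul _ _ _
    _ ≤ H.act (Qf.supp a) ⊤ := H.act_mono le_rfl le_top

lemma act_supp_of_le_act {a : Q} {x y : X} (h : x ≤ H.act a y) : H.act (Qf.supp a) x = x := by
  rw [H.anchor _ _ (Qf.supp_le_e a)]
  exact inf_eq_right.2 (h.trans (H.act_le_act_supp_top a y))

variable {H} in
lemma IsPrincipalSection.act {t : X} (ht : H.IsPrincipalSection t) {u : Q}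
    (hu : u ∈ Qf.toQuantale.PU) : H.IsPrincipalSection (H.act u t) := by
  obtain ⟨htl, hte⟩ := ht
  obtain ⟨huu, huu'⟩ := hu
  have hss : H.inner (H.act u t) (H.act u t) ≤ Qf.e := by
    rw [H.inner_act_act]
    exact Qf.mul_mul_star_le_e huu hte
  refine ⟨fun x hx => ?_, hss⟩
  have hxx : H.inner x x ≤ Qf.e := (H.inner_mono hx hx).trans hss
  have hfix : H.act (Qf.mul u (Qf.star u)) x = x := by
    rw [← Qf.supp_eq_mul_star huu]
    exact H.act_supp_of_le_act hx
  have hxt : H.act (Qf.star u) x ≤ t :=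
    calc H.act (Qf.star u) x ≤ H.act (Qf.star u) (H.act u t) := H.act_mono le_rfl hx
      _ = H.act (Qf.mul (Qf.star u) u) t := (H.act_mul _ _ _).symm
      _ ≤ H.act Qf.e t := H.act_mono huu' le_rfl
      _ = t := H.act_e t
  have hspp : H.sppX (H.act (Qf.star u) x) = Qf.mul (Qf.mul (Qf.star u) (H.inner x x)) u := by
    have h := H.inner_act_act (Qf.star u) x
    have hle := Qf.mul_mul_star_le_e (a := Qf.star u) (by rwa [Qf.star_star]) hxx
    rw [Qf.star_star] at h hle
    rw [H.sppX_eq_inner_self (h ▸ hle), h]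
  have hxx_fix : Qf.mul (Qf.mul u (Qf.star u)) (H.inner x x) = H.inner x x := by
    rw [← H.inner_act, hfix]
  rw [H.sppX_eq_inner_self hxx]
  calc H.act (H.inner x x) (H.act u t)
      = H.act u (H.act (Qf.mul (Qf.mul (Qf.star u) (H.inner x x)) u) t) := by
        simp only [← H.act_mul, ← Qf.mul_assoc, hxx_fix]
    _ = H.act u (H.act (Qf.star u) x) := by rw [← hspp, htl _ hxt]
    _ = x := by rw [← H.act_mul, hfix]

end QSheaf

/-- If `t` is a principal section, `u ∈ Q_I` and
`ς_X(t) = ς_Q(u*)`, then `s := ut` is a principal section, `⟨s,t⟩ = u` and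
`ς_X(s) = ς_Q(u)`. -/
theorem stmt11 {Q X : Type*} [Order.Frame Q] [Order.Frame X]
    (Qf : InverseQuantalFrame Q) (H : QSheaf Qf X)
    (t : X) (u : Q)
    (ht : H.IsPrincipalSection t) (hu : u ∈ Qf.toQuantale.PU)
    (hst : H.sppX t = Qf.supp (Qf.star u)) :
    H.IsPrincipalSection (H.act u t) ∧
    H.inner (H.act u t) t = u ∧
    H.sppX (H.act u t) = Qf.supp u := by
  have hsupp : Qf.supp u = Qf.mul u (Qf.star u) := Qf.supp_eq_mul_star hu.1
  have htt : H.inner t t = Qf.mul (Qf.star u) u := by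
    rw [← H.sppX_eq_inner_self ht.2, hst, Qf.supp_eq_mul_star (by rw [Qf.star_star]; exact hu.2),
      Qf.star_star]
  have hst_inner : H.inner (H.act u t) t = u := by
    rw [H.inner_act, htt, ← Qf.mul_assoc, Qf.mul_star_mul_eq hu.1]
  have hss : H.inner (H.act u t) (H.act u t) = Qf.supp u := by
    rw [H.inner_act, H.inner_star t, hst_inner, hsupp]
  refine ⟨ht.act hu, hst_inner, ?_⟩
  rw [H.sppX_eq_inner_self (hss ▸ Qf.supp_le_e u), hss]
end
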